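/- arXiv:math/0509564 — 3 statements merged into one kernel-verified Lean document; each statement's English description precedes it below -/
import Mathlib

section
/- For the star graph K_{1,n−1} on n vertices (n ≥ 3), the configuration placing one pebble on each of n−2 leaves and no pebbles elsewhere is not domination cover solvable; hence ψ(K_{1,n−1}) > n − 2. -/
open Finset

/-- A single pebbling move: remove two pebbles from `u`, add one to a neighbor `v`. -/
def PebblingMove {V : Type*} [DecidableEq V] (G : SimpleGraph V) (c c' : V → ℕ) : Prop :=
  ∃ u v, G.Adj u v ∧ 2 ≤ c u ∧
    c' = fun w => if w = u then c u - 2 else if w = v then c w + 1 else c w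

/-- `c'` is reachable from `c` by a sequence of pebbling moves. -/
def PebblingReach {V : Type*} [DecidableEq V] (G : SimpleGraph V) : (V → ℕ) → (V → ℕ) → Prop :=
  Relation.ReflTransGen (PebblingMove G)

/-- The occupied vertices of `c` form a dominating set of `G`. -/
def OccupiedDominates {V : Type*} (G : SimpleGraph V) (c : V → ℕ) : Prop :=
  ∀ v, 0 < c v ∨ ∃ u, G.Adj v u ∧ 0 < c u

/-- A configuration is domination-cover-pebbling solvable. -/
def DCPSolvable {V : Type*} [DecidableEq V] (G : SimpleGraph V) (c : V → ℕ) : Prop :=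
  ∃ c', PebblingReach G c c' ∧ OccupiedDominates G c'

/-- The domination cover pebbling number. -/
noncomputable def dcpNumber {V : Type*} [Fintype V] [DecidableEq V] (G : SimpleGraph V) : ℕ :=
  sInf {m | ∀ c : V → ℕ, m ≤ ∑ v, c v → DCPSolvable G c}

/-- The cover pebbling number. -/
noncomputable def coverPebblingNumber {V : Type*} [Fintype V] [DecidableEq V]
    (G : SimpleGraph V) : ℕ :=
  sInf {m | ∀ c : V → ℕ, m ≤ ∑ v, c v →
    ∃ c', PebblingReach G c c' ∧ ∀ v, 0 < c' v}

/-- `v` is undominated by the occupied set of `c`. -/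
def Undominated {V : Type*} (G : SimpleGraph V) (c : V → ℕ) (v : V) : Prop :=
  c v = 0 ∧ ∀ u, G.Adj v u → c u = 0

/-- Every connected set of undominated vertices has at most `ω` vertices. -/
def SubversionSolved {V : Type*} (G : SimpleGraph V) (c : V → ℕ) (ω : ℕ) : Prop :=
  ∀ s : Finset V, (∀ v ∈ s, Undominated G c v) → (G.induce (s : Set V)).Connected →
    s.card ≤ ω

/-- The ω-subversion domination cover pebbling number. -/
noncomputable def subversionNumber {V : Type*} [Fintype V] [DecidableEq V]
    (G : SimpleGraph V) (ω : ℕ) : ℕ :=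
  sInf {m | ∀ c : V → ℕ, m ≤ ∑ v, c v →
    ∃ c', PebblingReach G c c' ∧ SubversionSolved G c' ω}


/-- The star graph on `Fin n`, with center `0`. -/
def starGraph (n : ℕ) : SimpleGraph (Fin n) where
  Adj u v := u ≠ v ∧ (u.val = 0 ∨ v.val = 0)
  symm := ⟨by intro u v ⟨h1, h2⟩; exact ⟨h1.symm, h2.symm⟩⟩
  loopless := ⟨by intro v h; exact h.1 rfl⟩

/-- On the star `K_{1,n-1}` (center `0`), the configuration with one pebble on each of the
`n - 2` leaves `1, …, n - 2` and none elsewhere is not domination cover solvable; hence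
`ψ(K_{1,n-1}) > n - 2`. -/
theorem star_config_not_solvable (n : ℕ) (hn : 3 ≤ n) :
    ¬ DCPSolvable (starGraph n) (fun v => if v.val = 0 ∨ v.val = n - 1 then 0 else 1) ∧
    n - 2 < dcpNumber (starGraph n) := by
  haveI : NeZero n := ⟨by omega⟩
  set c₀ : Fin n → ℕ := (fun v => if v.val = 0 ∨ v.val = n - 1 then 0 else 1) with hc₀
  have hzero : ((0 : Fin n) : ℕ) = 0 := by simp
  -- the key non-solvability fact
  have key : ¬ DCPSolvable (starGraph n) c₀ := by
    rintro ⟨c', hreach, hdom⟩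
    have hc' : c' = c₀ := by
      rcases hreach.cases_head with h | ⟨b, ⟨u, v, hadj, hu, _⟩, _⟩
      · exact h.symm
      · exfalso
        have : c₀ u ≤ 1 := by simp only [hc₀]; split <;> omega
        omega
    subst hc'
    set w : Fin n := ⟨n - 1, by omega⟩ with hw
    rcases hdom w with h | ⟨u, hadj, hu⟩
    · simp [hc₀, hw] at h
    · rcases hadj with ⟨hne, h0 | h0⟩
      · simp only [hw] at h0; omega
      · simp [hc₀, h0, (Fin.ext (h0.trans hzero.symm) : u = 0)] at hu
  refine ⟨key, ?_⟩
  -- solvability with n pebbles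
  have hsolv : ∀ c : Fin n → ℕ, n ≤ ∑ v, c v → DCPSolvable (starGraph n) c := by
    intro c hc
    by_cases h0 : 0 < c 0
    · refine ⟨c, Relation.ReflTransGen.refl, fun v => ?_⟩
      by_cases hv : v = 0
      · exact Or.inl (hv ▸ h0)
      · exact Or.inr ⟨0, ⟨hv, Or.inr hzero⟩, h0⟩
    · have hex : ∃ u : Fin n, u ≠ 0 ∧ 2 ≤ c u := by
        by_contra h
        push_neg at h
        have hb : ∀ u : Fin n, c u ≤ if u = 0 then 0 else 1 := by
          intro u
          by_cases hu : u = 0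
          · simp [hu]; omega
          · have := h u hu; simp [hu]; omega
        have hle : ∑ v, c v ≤ ∑ v : Fin n, (if v = 0 then 0 else 1) :=
          Finset.sum_le_sum (fun v _ => hb v)
        have hsum : ∑ v : Fin n, (if v = 0 then 0 else 1) = n - 1 := by
          rw [← Finset.sum_erase (f := fun v : Fin n => if v = 0 then 0 else 1)
            (a := 0) Finset.univ (by simp)]
          rw [Finset.sum_congr rfl
            (fun x hx => if_neg (Finset.ne_of_mem_erase hx))]
          simp [Finset.card_erase_of_mem]
        omega
      obtain ⟨u, hu0, hu2⟩ := hex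
      set c' : Fin n → ℕ :=
        fun w => if w = u then c u - 2 else if w = 0 then c w + 1 else c w with hc'
      have hadj : (starGraph n).Adj u 0 := ⟨hu0, Or.inr hzero⟩
      have hmove : PebblingMove (starGraph n) c c' := ⟨u, 0, hadj, hu2, rfl⟩
      have hc'0 : 0 < c' 0 := by
        simp [hc', Ne.symm hu0]
      refine ⟨c', Relation.ReflTransGen.single hmove, fun v => ?_⟩
      by_cases hv : v = 0
      · exact Or.inl (hv ▸ hc'0)
      · exact Or.inr ⟨0, ⟨hv, Or.inr hzero⟩, hc'0⟩
  by_contra h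
  push_neg at h
  have hne : {m | ∀ c : Fin n → ℕ, m ≤ ∑ v, c v → DCPSolvable (starGraph n) c}.Nonempty :=
    ⟨n, hsolv⟩
  have hmem := Nat.sInf_mem hne
  -- the sum of c₀ is at least n - 2
  have hsum : n - 2 ≤ ∑ v, c₀ v := by
    set s : Finset (Fin n) := {(0 : Fin n), ⟨n - 1, by omega⟩} with hs
    have h1 : ∀ v ∈ Finset.univ \ s, 1 ≤ c₀ v := by
      intro v hv
      simp only [hs, Finset.mem_sdiff, Finset.mem_insert, Finset.mem_singleton] at hv
      have hv1 : v.val ≠ 0 := by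
        intro hh; exact hv.2 (Or.inl (by ext; simp [hh, hzero]))
      have hv2 : v.val ≠ n - 1 := by
        intro hh; exact hv.2 (Or.inr (by ext; simp [hh]))
      simp only [hc₀]; rw [if_neg (by omega)]
    calc n - 2 ≤ (Finset.univ \ s).card := by
          have h2 : s.card ≤ 2 := by
            apply le_trans (Finset.card_insert_le _ _); simp
          have := Finset.card_sdiff_of_subset (Finset.subset_univ s)
          simp only [Finset.card_univ, Fintype.card_fin] at this
          omega
      _ = ∑ v ∈ Finset.univ \ s, 1 := by simp
      _ ≤ ∑ v ∈ Finset.univ \ s, c₀ v := Finset.sum_le_sum h1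
      _ ≤ ∑ v, c₀ v := Finset.sum_le_sum_of_subset (Finset.sdiff_subset)
  exact key (hmem c₀ (le_trans (le_trans h hsum) (le_refl _)))
end

section
/- If a configuration c on a graph G has total size at least 2^{d−2}(n−2)+1, where n = |V(G)|, then its clumping number χ(c) := Σ_{v∈V(G)} 2^{d−2}·max(⌊(c(v)−1)/2^{d−2}⌋, 0) satisfies χ(c) ≥ 2^{d−2}(|C₀| − 1), where C₀ is the set of unoccupied vertices of c. -/
open Finset

/-- If a configuration `c` on a graph `G` with `n` vertices has size at least
`2^(d-2)·(n-2) + 1`, then its clumping number `χ(c)` satisfies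
`χ(c) ≥ 2^(d-2)·(|C₀| - 1)`, where `C₀` is the set of unoccupied vertices. -/
theorem clumping_number_bound {V : Type*} [Fintype V] [DecidableEq V] (G : SimpleGraph V)
    (d : ℕ) (hd : 2 ≤ d) (c : V → ℕ)
    (hc : 2 ^ (d - 2) * (Fintype.card V - 2) + 1 ≤ ∑ v, c v) :
    2 ^ (d - 2) * ((Finset.univ.filter fun v => c v = 0).card - 1) ≤
      ∑ v, 2 ^ (d - 2) * ((c v - 1) / 2 ^ (d - 2)) := by
  set k := 2 ^ (d - 2) with hk
  have hkpos : 0 < k := Nat.pow_pos (by norm_num)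
  set Z := Finset.univ.filter fun v => c v = 0 with hZ
  by_cases hz : Z.card ≤ 1
  · have : Z.card - 1 = 0 := by omega
    simp [this]
  push_neg at hz
  have hzn : Z.card ≤ Fintype.card V := by
    simpa using Finset.card_filter_le Finset.univ (fun v => c v = 0)
  have hsplit := Finset.card_filter_add_card_filter_not
    (s := (Finset.univ : Finset V)) (p := fun v => c v = 0)
  have key : ∑ v, c v ≤ (∑ v, k * ((c v - 1) / k))
      + k * (Fintype.card V - Z.card) := by
    have h1 : ∑ v, c v ≤ ∑ v, (k * ((c v - 1) / k) + if c v = 0 then 0 else k) := by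
      apply Finset.sum_le_sum
      intro v _
      by_cases h : c v = 0
      · simp [h]
      · have h1 : 1 ≤ c v := Nat.one_le_iff_ne_zero.mpr h
        have h2 := Nat.div_add_mod (c v - 1) k
        have h2' := Nat.mod_lt (c v - 1) hkpos
        have h3 : c v ≤ k * ((c v - 1) / k) + k := by omega
        simp [h, h3]
    have h2 : ∑ v, ((if c v = 0 then (0:ℕ) else k)) =
        (Finset.univ.filter fun v => ¬ c v = 0).card * k := by
      rw [Finset.sum_ite]
      simp
    rw [Finset.sum_add_distrib, h2] at h1
    have h3 : (Finset.univ.filter fun v => ¬ c v = 0).card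
        = Fintype.card V - Z.card := by
      have hze : Z.card = (Finset.univ.filter fun v => c v = 0).card := rfl
      simp only [Finset.card_univ] at hsplit
      omega
    rw [h3, Nat.mul_comm (Fintype.card V - Z.card) k] at h1
    exact h1
  rw [← Finset.mul_sum] at key ⊢
  set T := ∑ v, (c v - 1) / k with hT
  by_contra hcon
  push_neg at hcon
  have hTle : T ≤ Z.card - 2 := by
    have := Nat.lt_of_mul_lt_mul_left hcon
    omega
  have : k * T + k * (Fintype.card V - Z.card) ≤ k * (Fintype.card V - 2) := by
    have : T + (Fintype.card V - Z.card) ≤ Fintype.card V - 2 := by omega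
    calc k * T + k * (Fintype.card V - Z.card)
        = k * (T + (Fintype.card V - Z.card)) := by ring
      _ ≤ k * (Fintype.card V - 2) := Nat.mul_le_mul_left _ this
  omega
end

section
/- For each n ≥ ω + 3 and ω ≥ 1, there is a diameter-2 graph H_n on n vertices with Ω_ω(H_n) > n − 2 − ω, so the bound Ω_ω(G) ≤ n − 1 − ω for diameter-2 graphs is sharp. -/
open Finset

/-- The extremal graph: star `K_{1,n-1}` with center `0`, plus a star among the
leaves `1, ..., ω+1` centered at leaf `1`. -/
def HGraph (ω n : ℕ) : SimpleGraph (Fin n) where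
  Adj u v := u ≠ v ∧ (u.val = 0 ∨ v.val = 0 ∨
    (u.val = 1 ∧ v.val ≤ ω + 1) ∨ (v.val = 1 ∧ u.val ≤ ω + 1))
  symm := ⟨by intro u v ⟨h1, h2⟩; exact ⟨h1.symm, by tauto⟩⟩
  loopless := ⟨fun v h => h.1 rfl⟩

lemma hgraph_adj {ω n : ℕ} {u v : Fin n} :
    (HGraph ω n).Adj u v ↔ u ≠ v ∧ (u.val = 0 ∨ v.val = 0 ∨
      (u.val = 1 ∧ v.val ≤ ω + 1) ∨ (v.val = 1 ∧ u.val ≤ ω + 1)) := Iff.rfl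

/-- If the center is occupied, the subversion condition is solved (no undominated
vertices at all). -/
lemma solved_of_center_pos {ω n : ℕ} (hn : 0 < n) (c : Fin n → ℕ)
    (hc : 0 < c ⟨0, hn⟩) (k : ℕ) : SubversionSolved (HGraph ω n) c k := by
  intro s hs _
  have hempty : s = ∅ := by
    by_contra hne
    obtain ⟨v, hv⟩ := Finset.nonempty_iff_ne_empty.mpr hne
    obtain ⟨hv0, hvadj⟩ := hs v hv
    by_cases hvz : v = ⟨0, hn⟩
    · rw [hvz] at hv0; omega
    · have hadj : (HGraph ω n).Adj v ⟨0, hn⟩ := ⟨hvz, Or.inr (Or.inl rfl)⟩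
      have := hvadj _ hadj
      omega
  simp [hempty]


/-- For each `ω ≥ 1` and `n ≥ ω + 3` there is a diameter-2 graph `H_n` on `n` vertices with
`Ω_ω(H_n) > n - 2 - ω`; hence the bound `Ω_ω(G) ≤ n - 1 - ω` for diameter-2 graphs is sharp. -/
theorem subversion_diam_two_sharp (ω n : ℕ) (hω : 1 ≤ ω) (hn : ω + 3 ≤ n) :
    ∃ (V : Type) (inst1 : Fintype V) (inst2 : DecidableEq V) (G : SimpleGraph V),
      Fintype.card V = n ∧ G.ediam = 2 ∧
      n - 2 - ω < @subversionNumber V inst1 inst2 G ω := by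
  classical
  refine ⟨Fin n, inferInstance, inferInstance, HGraph ω n, by simp, ?_, ?_⟩
  -- diameter 2
  · have hn0 : 0 < n := by omega
    have h2n : 2 < n := by omega
    have hwn : ω + 2 < n := by omega
    apply le_antisymm
    · apply SimpleGraph.ediam_le_of_edist_le
      intro u v
      by_cases huv : u = v
      · simp [huv]
      by_cases hadj : (HGraph ω n).Adj u v
      · rw [SimpleGraph.edist_eq_one_iff_adj.mpr hadj]; norm_num
      · have hu0 : u.val ≠ 0 := by
          intro h
          exact hadj ⟨huv, Or.inl h⟩
        have hv0 : v.val ≠ 0 := by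
          intro h
          exact hadj ⟨huv, Or.inr (Or.inl h)⟩
        have h1 : (HGraph ω n).Adj u ⟨0, hn0⟩ := ⟨by simp [Fin.ext_iff, hu0], Or.inr (Or.inl rfl)⟩
        have h2 : (HGraph ω n).Adj (⟨0, hn0⟩ : Fin n) v := ⟨by simp [Fin.ext_iff, Ne.symm hv0], Or.inl rfl⟩
        have hw : ((SimpleGraph.Walk.cons h1 (SimpleGraph.Walk.cons h2 SimpleGraph.Walk.nil)).length : ℕ∞) = 2 := by
          simp
        calc (HGraph ω n).edist u v ≤ _ := SimpleGraph.edist_le _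
          _ = 2 := hw
    · set a : Fin n := ⟨2, by omega⟩ with ha
      set b : Fin n := ⟨ω + 2, by omega⟩ with hb
      have hne : a ≠ b := by simp only [ha, hb, ne_eq, Fin.mk.injEq]; omega
      have hnadj : ¬ (HGraph ω n).Adj a b := by
        rintro ⟨-, h⟩
        simp only [ha, hb] at h
        omega
      have h1 : 1 < (HGraph ω n).edist a b := by
        rcases lt_or_eq_of_le (Order.one_le_iff_pos.mpr ((HGraph ω n).edist_pos_of_ne hne)) with h | h
        · exact h
        · exact absurd (SimpleGraph.edist_eq_one_iff_adj.mp h.symm) hnadj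
      have := Order.add_one_le_of_lt h1
      calc (2 : ℕ∞) = 1 + 1 := by norm_num
        _ ≤ (HGraph ω n).edist a b := this
        _ ≤ (HGraph ω n).ediam := SimpleGraph.edist_le_ediam
  -- pebbling bound
  · have hn0 : 0 < n := by omega
    set G := HGraph ω n with hG
    set S : Set ℕ := {m | ∀ c : Fin n → ℕ, m ≤ ∑ v, c v →
      ∃ c', PebblingReach G c c' ∧ SubversionSolved G c' ω} with hS
    have hup : (n + 1) ∈ S := by
      intro c hc
      by_cases h0 : 0 < c ⟨0, hn0⟩
      · exact ⟨c, Relation.ReflTransGen.refl, solved_of_center_pos hn0 c h0 ω⟩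
      · have h0' : c ⟨0, hn0⟩ = 0 := by omega
        have : ∃ u : Fin n, 2 ≤ c u := by
          by_contra h
          push_neg at h
          have : ∑ v, c v ≤ Finset.univ.card • 1 :=
            Finset.sum_le_card_nsmul _ _ 1 (fun v _ => by have := h v; omega)
          simp at this
          omega
        obtain ⟨u, hu⟩ := this
        have hune : u ≠ ⟨0, hn0⟩ := by
          intro h; rw [h] at hu; omega
        have hadj : G.Adj u ⟨0, hn0⟩ := ⟨hune, Or.inr (Or.inl rfl)⟩
        set c' : Fin n → ℕ :=
          fun w => if w = u then c u - 2 else if w = (⟨0, hn0⟩ : Fin n) then c w + 1 else c w with hc'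
        refine ⟨c', Relation.ReflTransGen.single ⟨u, ⟨0, hn0⟩, hadj, hu, rfl⟩, ?_⟩
        apply solved_of_center_pos hn0
        simp [hc', Ne.symm hune]
    have hnot : (n - 2 - ω) ∉ S := by
      intro hmem
      set c : Fin n → ℕ := fun v => if ω + 2 ≤ v.val then 1 else 0 with hc
      have hsum : (n - 2 - ω : ℕ) ≤ ∑ v, c v := by
        simp only [hc]
        rw [Fin.sum_univ_eq_sum_range (fun i => if ω + 2 ≤ i then 1 else 0) n,
          Finset.range_eq_Ico,
          ← Finset.sum_Ico_consecutive _ (Nat.zero_le (ω + 2)) (by omega : ω + 2 ≤ n)]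
        have h1 : ∑ i ∈ Finset.Ico 0 (ω + 2), (if ω + 2 ≤ i then 1 else 0) = 0 := by
          apply Finset.sum_eq_zero
          intro i hi
          simp only [Finset.mem_Ico] at hi
          simp [Nat.not_le.mpr hi.2]
        have h2 : ∑ i ∈ Finset.Ico (ω + 2) n, (if ω + 2 ≤ i then 1 else 0)
            = n - (ω + 2) := by
          have hall : ∀ i ∈ Finset.Ico (ω + 2) n, (if ω + 2 ≤ i then (1 : ℕ) else 0) = 1 := by
            intro i hi
            simp only [Finset.mem_Ico] at hi
            simp [hi.1]
          rw [Finset.sum_congr rfl hall]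
          simp [Nat.card_Ico]
        rw [h1, h2]
        omega
      obtain ⟨c', hreach, hsolved⟩ := hmem c hsum
      -- no moves are possible from c
      have hnomove : ∀ c'', ¬ PebblingMove G c c'' := by
        rintro c'' ⟨u, v, -, hu, -⟩
        have : c u ≤ 1 := by
          simp only [hc]
          split <;> omega
        omega
      have hcc : c' = c := by
        rcases Relation.ReflTransGen.cases_head hreach with h | ⟨b, hb, -⟩
        · exact h.symm
        · exact absurd hb (hnomove b)
      subst hcc
      -- the set {1, ..., ω+1} is undominated and connected, of size ω+1
      set f : Fin (ω + 1) → Fin n := fun i => ⟨i.val + 1, by omega⟩ with hf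
      have hfinj : Function.Injective f := by
        intro i j h
        simp only [hf, Fin.ext_iff] at h ⊢
        omega
      set s : Finset (Fin n) := Finset.image f Finset.univ with hs'
      have hmem' : ∀ v : Fin n, v ∈ s ↔ 1 ≤ v.val ∧ v.val ≤ ω + 1 := by
        intro v
        simp only [hs', Finset.mem_image, Finset.mem_univ, true_and]
        constructor
        · rintro ⟨i, rfl⟩
          simp only [hf]
          exact ⟨by omega, by omega⟩
        · rintro ⟨h1, h2⟩
          exact ⟨⟨v.val - 1, by omega⟩, by simp [hf, Fin.ext_iff]; omega⟩
      have hcard : s.card = ω + 1 := by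
        rw [hs', Finset.card_image_of_injective _ hfinj, Finset.card_univ, Fintype.card_fin]
      have hundo : ∀ v ∈ s, Undominated G c v := by
        intro v hv
        rw [hmem'] at hv
        constructor
        · simp only [hc]
          have : ¬ ω + 2 ≤ v.val := by omega
          simp [this]
        · rintro u ⟨hne, hor⟩
          simp only [hc]
          have : ¬ ω + 2 ≤ u.val := by
            rcases hor with h | h | ⟨h, h'⟩ | ⟨h, h'⟩ <;> omega
          simp [this]
      have hone : (⟨1, by omega⟩ : Fin n) ∈ (s : Set (Fin n)) := by
        simp only [Finset.coe_sort_coe, Finset.mem_coe]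
        rw [hmem']
        simp
      have hconn : (G.induce (s : Set (Fin n))).Connected := by
        rw [SimpleGraph.connected_iff]
        constructor
        · -- preconnected: everything reachable from vertex 1
          have hreach1 : ∀ x : (s : Set (Fin n)),
              (G.induce (s : Set (Fin n))).Reachable x ⟨⟨1, by omega⟩, hone⟩ := by
            rintro ⟨x, hx⟩
            by_cases hx1 : x = (⟨1, by omega⟩ : Fin n)
            · subst hx1; rfl
            · have hxs : 1 ≤ x.val ∧ x.val ≤ ω + 1 := by
                have := hx
                simp only [Finset.mem_coe] at this
                exact (hmem' x).mp this
              have hadj : (G.induce (s : Set (Fin n))).Adj ⟨x, hx⟩ ⟨⟨1, by omega⟩, hone⟩ := by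
                show G.Adj x ⟨1, by omega⟩
                exact ⟨hx1, Or.inr (Or.inr (Or.inr ⟨rfl, hxs.2⟩))⟩
              exact hadj.reachable
          intro x y
          exact (hreach1 x).trans (hreach1 y).symm
        · exact ⟨⟨⟨1, by omega⟩, hone⟩⟩
      have := hsolved s hundo hconn
      omega
    have hSne : S.Nonempty := ⟨n + 1, hup⟩
    have hsInf := Nat.sInf_mem hSne
    rw [show @subversionNumber (Fin n) _ _ G ω = sInf S from rfl]
    by_contra h
    push_neg at h
    apply hnot
    intro c hc
    exact hsInf c (le_trans h hc)
end
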